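/- arXiv:2207.11969 — 3 statements merged into one kernel-verified Lean document; each statement's English description precedes it below -/
import Mathlib

section
/- Let d ≥ 1 and let S be a finite index set. Suppose for each σ ∈ S we have B_σ ≥ 0, ρ_σ > 0, m_σ ∈ ℝ^d, E_σ ∈ ℝ, and that each nodal state is admissible: E_σ − ‖m_σ‖²/(2ρ_σ) ≥ 0. If moreover ∑_{σ∈S} ρ_σ B_σ > 0, then the reconstructed state satisfies ∑_{σ∈S} E_σ B_σ − ‖∑_{σ∈S} m_σ B_σ‖² / (2 ∑_{σ∈S} ρ_σ B_σ) ≥ ∑_{σ∈S} (E_σ − ‖m_σ‖²/(2ρ_σ)) B_σ ≥ 0; in particular the reconstructed internal energy is nonnegative. -/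
/-- If each nodal state `(ρ_σ, m_σ, E_σ)` is admissible and the Bernstein weights `B_σ` are
nonnegative with `∑ ρ_σ B_σ > 0`, then the reconstructed internal energy is bounded below by
the reconstruction of the nodal internal energies and in particular is nonnegative
(the inclusion `K̄'_th ⊂ K'_th`). -/
theorem reconstructed_internal_energy_nonneg (d : ℕ) (hd : 1 ≤ d) {ι : Type*} (S : Finset ι)
    (B ρ E : ι → ℝ) (m : ι → EuclideanSpace ℝ (Fin d))
    (hB : ∀ σ ∈ S, 0 ≤ B σ) (hρ : ∀ σ ∈ S, 0 < ρ σ)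
    (hadm : ∀ σ ∈ S, 0 ≤ E σ - ‖m σ‖ ^ 2 / (2 * ρ σ))
    (hpos : 0 < ∑ σ ∈ S, ρ σ * B σ) :
    (∑ σ ∈ S, E σ * B σ) - ‖∑ σ ∈ S, B σ • m σ‖ ^ 2 / (2 * ∑ σ ∈ S, ρ σ * B σ) ≥
        ∑ σ ∈ S, (E σ - ‖m σ‖ ^ 2 / (2 * ρ σ)) * B σ ∧
      (0:ℝ) ≤ ∑ σ ∈ S, (E σ - ‖m σ‖ ^ 2 / (2 * ρ σ)) * B σ ∧
      (0:ℝ) ≤ (∑ σ ∈ S, E σ * B σ) - ‖∑ σ ∈ S, B σ • m σ‖ ^ 2 / (2 * ∑ σ ∈ S, ρ σ * B σ) := by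
  set R : ℝ := ∑ σ ∈ S, ρ σ * B σ with hR
  -- norm of sum bounded by sum of norms
  have h1 : ‖∑ σ ∈ S, B σ • m σ‖ ≤ ∑ σ ∈ S, B σ * ‖m σ‖ := by
    calc ‖∑ σ ∈ S, B σ • m σ‖ ≤ ∑ σ ∈ S, ‖B σ • m σ‖ := norm_sum_le _ _
      _ = ∑ σ ∈ S, B σ * ‖m σ‖ := by
          refine Finset.sum_congr rfl fun σ hσ => ?_
          rw [norm_smul, Real.norm_eq_abs, abs_of_nonneg (hB σ hσ)]
  have h1' : 0 ≤ ∑ σ ∈ S, B σ * ‖m σ‖ :=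
    Finset.sum_nonneg fun σ hσ => mul_nonneg (hB σ hσ) (norm_nonneg _)
  -- Cauchy–Schwarz
  have h2 : (∑ σ ∈ S, B σ * ‖m σ‖) ^ 2 ≤ R * ∑ σ ∈ S, ‖m σ‖ ^ 2 / ρ σ * B σ := by
    refine Finset.sum_sq_le_sum_mul_sum_of_sq_eq_mul S
      (fun σ hσ => mul_nonneg (hρ σ hσ).le (hB σ hσ))
      (fun σ hσ => mul_nonneg (div_nonneg (sq_nonneg _) (hρ σ hσ).le) (hB σ hσ))
      (fun σ hσ => ?_)
    have := (hρ σ hσ).ne'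
    field_simp
  have h3 : ‖∑ σ ∈ S, B σ • m σ‖ ^ 2 ≤ R * ∑ σ ∈ S, ‖m σ‖ ^ 2 / ρ σ * B σ :=
    le_trans (by exact pow_le_pow_left₀ (norm_nonneg _) h1 2) h2
  have h4 : ‖∑ σ ∈ S, B σ • m σ‖ ^ 2 / (2 * R) ≤ ∑ σ ∈ S, ‖m σ‖ ^ 2 / (2 * ρ σ) * B σ := by
    rw [div_le_iff₀ (by positivity)]
    calc ‖∑ σ ∈ S, B σ • m σ‖ ^ 2 ≤ R * ∑ σ ∈ S, ‖m σ‖ ^ 2 / ρ σ * B σ := h3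
      _ = (∑ σ ∈ S, ‖m σ‖ ^ 2 / (2 * ρ σ) * B σ) * (2 * R) := by
          rw [Finset.mul_sum, Finset.sum_mul]
          refine Finset.sum_congr rfl fun σ hσ => ?_
          have := (hρ σ hσ).ne'
          field_simp
  have hsum : ∑ σ ∈ S, (E σ - ‖m σ‖ ^ 2 / (2 * ρ σ)) * B σ =
      (∑ σ ∈ S, E σ * B σ) - ∑ σ ∈ S, ‖m σ‖ ^ 2 / (2 * ρ σ) * B σ := by
    rw [← Finset.sum_sub_distrib]
    exact Finset.sum_congr rfl fun σ hσ => by ring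
  have key : (∑ σ ∈ S, E σ * B σ) - ‖∑ σ ∈ S, B σ • m σ‖ ^ 2 / (2 * R) ≥
      ∑ σ ∈ S, (E σ - ‖m σ‖ ^ 2 / (2 * ρ σ)) * B σ := by
    rw [hsum]; linarith
  have hnn : (0:ℝ) ≤ ∑ σ ∈ S, (E σ - ‖m σ‖ ^ 2 / (2 * ρ σ)) * B σ :=
    Finset.sum_nonneg fun σ hσ => mul_nonneg (hadm σ hσ) (hB σ hσ)
  exact ⟨key, hnn, le_trans hnn key⟩
end

section
/- Let d ≥ 1, γ > 1, ρ > 0, p > 0, and set a = √(γp/ρ) and e = p/((γ−1)ρ). Then for all u, v, N ∈ ℝ^d, p·⟨u − v, N⟩ + ⟨u, N⟩·((ρ/2)‖u − v‖² + ρe) ≤ ‖N‖·(‖u‖ + a)·((ρ/2)‖u − v‖² + ρe). -/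
open scoped RealInnerProductSpace

/-- Key estimate for the positivity analysis of the Lax–Friedrichs residual:
`p⟨u−v,N⟩ + ⟨u,N⟩((ρ/2)‖u−v‖² + ρe) rest` -/
theorem DN_bound (d : ℕ) (hd : 1 ≤ d) (γ ρ p : ℝ) (hγ : 1 < γ) (hρ : 0 < ρ) (hp : 0 < p)
    (u v N : EuclideanSpace ℝ (Fin d)) :
    p * ⟪u - v, N⟫ + ⟪u, N⟫ * ((ρ / 2) * ‖u - v‖ ^ 2 + ρ * (p / ((γ - 1) * ρ))) ≤
      ‖N‖ * (‖u‖ + Real.sqrt (γ * p / ρ)) *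
        ((ρ / 2) * ‖u - v‖ ^ 2 + ρ * (p / ((γ - 1) * ρ))) := by
  set a := Real.sqrt (γ * p / ρ) with ha
  have hγ1 : (0:ℝ) < γ - 1 := by linarith
  have hE0 : ρ * (p / ((γ - 1) * ρ)) = p / (γ - 1) := by
    field_simp
  have ha2 : a ^ 2 = γ * p / ρ := Real.sq_sqrt (by positivity)
  have ha0 : 0 < a := Real.sqrt_pos.mpr (by positivity)
  set t := ‖u - v‖ with ht
  have ht0 : 0 ≤ t := norm_nonneg _
  have hE : 0 ≤ (ρ / 2) * t ^ 2 + ρ * (p / ((γ - 1) * ρ)) := by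
    rw [hE0]; positivity
  -- key scalar inequality: p * t ≤ a * ((ρ/2) t² + p/(γ-1))
  have ha2ρ : a ^ 2 * ρ = γ * p := by rw [ha2, div_mul_cancel₀ _ hρ.ne']
  set q := p / (γ - 1) with hqdef
  have hq : q * (γ - 1) = p := by rw [hqdef, div_mul_cancel₀ _ hγ1.ne']
  have hq0 : 0 < q := by positivity
  have key : p * t ≤ a * ((ρ / 2) * t ^ 2 + q) := by
    rw [← mul_le_mul_iff_of_pos_right (mul_pos ha0 hρ)]
    nlinarith [sq_nonneg (ρ * (a * t) - p), mul_pos hq0 hp, sq_nonneg p,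
      mul_pos (mul_pos hq0 hp) hγ1, mul_pos hp hp]
  have h1 : p * ⟪u - v, N⟫ ≤ p * (t * ‖N‖) := by
    have := real_inner_le_norm (u - v) N
    nlinarith
  have h2 : ⟪u, N⟫ * ((ρ / 2) * t ^ 2 + ρ * (p / ((γ - 1) * ρ))) ≤
      ‖u‖ * ‖N‖ * ((ρ / 2) * t ^ 2 + ρ * (p / ((γ - 1) * ρ))) := by
    exact mul_le_mul_of_nonneg_right (real_inner_le_norm u N) hE
  have hN0 : 0 ≤ ‖N‖ := norm_nonneg _
  have h3 : p * (t * ‖N‖) ≤ ‖N‖ * a * ((ρ / 2) * t ^ 2 + ρ * (p / ((γ - 1) * ρ))) := by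
    rw [hE0]
    nlinarith [mul_le_mul_of_nonneg_right key hN0]
  nlinarith [h1, h2, h3]
end

section
/- Let m ≥ 1 and let (V_σ)_{σ∈S} and (Φ_σ)_{σ∈S} be finite nonempty families of vectors in ℝ^m, with the V_σ not all equal, and let G ∈ ℝ. Let V̄ be the arithmetic mean of the V_σ, set E = G − ∑_{σ∈S} ⟨V_σ, Φ_σ⟩, α = E / ∑_{σ∈S} ‖V_σ − V̄‖², and define the corrected residuals Φ̃_σ = Φ_σ + α·(V_σ − V̄). Then ∑_{σ∈S} Φ̃_σ = ∑_{σ∈S} Φ_σ (conservation is unchanged) and ∑_{σ∈S} ⟨V_σ, Φ̃_σ⟩ = G (the discrete entropy condition holds exactly). -/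
open scoped RealInnerProductSpace

/-- The corrected residuals `Φ̃_σ = Φ_σ + α(V_σ − V̄)` with
`α = (G − ∑ ⟨V_σ, Φ_σ⟩) / ∑ ‖V_σ − V̄‖²` leave the conservation relation unchanged
and satisfy the discrete entropy condition `∑ ⟨V_σ, Φ̃_σ⟩ = G` exactly. -/
theorem entropy_corrected_residuals (m : ℕ) (hm : 1 ≤ m) {ι : Type*} (S : Finset ι)
    (hS : S.Nonempty) (V Φ : ι → EuclideanSpace ℝ (Fin m))
    (hne : ∃ σ ∈ S, ∃ σ' ∈ S, V σ ≠ V σ') (G : ℝ)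
    (Vbar : EuclideanSpace ℝ (Fin m)) (hVbar : Vbar = (S.card : ℝ)⁻¹ • ∑ σ ∈ S, V σ)
    (E : ℝ) (hE : E = G - ∑ σ ∈ S, ⟪V σ, Φ σ⟫)
    (α : ℝ) (hα : α = E / ∑ σ ∈ S, ‖V σ - Vbar‖ ^ 2)
    (Φt : ι → EuclideanSpace ℝ (Fin m)) (hΦt : ∀ σ, Φt σ = Φ σ + α • (V σ - Vbar)) :
    (∑ σ ∈ S, Φt σ = ∑ σ ∈ S, Φ σ) ∧ (∑ σ ∈ S, ⟪V σ, Φt σ⟫ = G) := by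
  have hcard : (S.card : ℝ) ≠ 0 := by
    exact_mod_cast Finset.card_ne_zero_of_mem hS.choose_spec
  have hsum0 : ∑ σ ∈ S, (V σ - Vbar) = 0 := by
    rw [Finset.sum_sub_distrib, Finset.sum_const, hVbar, ← Nat.cast_smul_eq_nsmul ℝ, smul_smul,
      mul_inv_cancel₀ hcard, one_smul, sub_self]
  -- denominator positive
  have hD : 0 < ∑ σ ∈ S, ‖V σ - Vbar‖ ^ 2 := by
    obtain ⟨σ, hσ, σ', hσ', hVV⟩ := hne
    have : V σ ≠ Vbar ∨ V σ' ≠ Vbar := by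
      by_contra h
      push_neg at h
      exact hVV (h.1.trans h.2.symm)
    obtain ⟨τ, hτ, hτne⟩ : ∃ τ ∈ S, V τ ≠ Vbar := by
      rcases this with h | h
      exacts [⟨σ, hσ, h⟩, ⟨σ', hσ', h⟩]
    apply Finset.sum_pos' (fun i _ => by positivity)
    exact ⟨τ, hτ, pow_pos (norm_pos_iff.mpr (sub_ne_zero.mpr hτne)) 2⟩
  constructor
  · simp only [hΦt, Finset.sum_add_distrib, ← Finset.smul_sum, hsum0, smul_zero, add_zero]
  · have key : ∑ σ ∈ S, ⟪V σ, V σ - Vbar⟫ = ∑ σ ∈ S, ‖V σ - Vbar‖ ^ 2 := by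
      have h1 : ∀ σ ∈ S, ⟪V σ, V σ - Vbar⟫ =
          ‖V σ - Vbar‖ ^ 2 + ⟪Vbar, V σ - Vbar⟫ := by
        intro σ _
        rw [← real_inner_self_eq_norm_sq, ← inner_add_left, sub_add_cancel]
      rw [Finset.sum_congr rfl h1, Finset.sum_add_distrib, ← inner_sum, hsum0,
        inner_zero_right, add_zero]
    have : ∑ σ ∈ S, ⟪V σ, Φt σ⟫
        = ∑ σ ∈ S, ⟪V σ, Φ σ⟫ + α * ∑ σ ∈ S, ⟪V σ, V σ - Vbar⟫ := by
      simp only [hΦt, inner_add_right, real_inner_smul_right, Finset.sum_add_distrib,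
        Finset.mul_sum]
    rw [this, key, hα, div_mul_cancel₀ _ hD.ne', hE]
    ring
end
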